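/- arXiv:1907.00877 — 8 statements merged into one kernel-verified Lean document; each statement's English description precedes it below -/
import Mathlib

section
/- Let M be a type equipped with a binary relation ∈ : M → M → Prop and a unary function V̄ : M → M satisfying Extensionality (∀ x y, (∀ z, z ∈ x ↔ z ∈ y) → x = y), the Defining Axiom for V̄ (∀ x y, y ∈ V̄(x) ↔ ∃ z, z ∈ x ∧ y ⊆ V̄(z)), and full Separation (∀ x : M, ∀ P : M → Prop, ∃ z : M, ∀ w, w ∈ z ↔ (w ∈ x ∧ P w)). Then the relation ∈ on M is well-founded; equivalently, ε-induction holds: for every predicate P : M → Prop, if for all y one has ((∀ z, z ∈ y → P z) → P y), then P y holds for all y. -/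
/-!
By Separation every subset of the members of `x` is cut out by a member-set, so by Cantor
there are strictly more sets `y ⊆ x` than members of `x`. The defining axiom of `V̄` puts every
`y ⊆ V̄ a` into `V̄ b` whenever `a ∈ b`. Hence `x ↦ #{w | w ∈ V̄ x}` is a strictly increasing map
from `∈` to the well-order of cardinals, and `∈` is well-founded.
-/

open Cardinal

section

variable {M : Type*} (mem : M → M → Prop)

theorem mk_mem_lt_mk_subset_of_separation {x : M}
    (sep : ∀ P : M → Prop, ∃ z : M, ∀ w, mem w z ↔ (mem w x ∧ P w)) :
    #{w | mem w x} < #{y | ∀ w, mem w y → mem w x} := by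
  choose g hg using fun S : Set {w | mem w x} => sep (· ∈ Subtype.val '' S)
  have g_sub (S) : ∀ w, mem w (g S) → mem w x := fun w hw => ((hg S w).1 hw).1
  have mem_g_iff (S) (w : {w | mem w x}) : mem w (g S) ↔ w ∈ S := by
    rw [hg S, Subtype.val_injective.mem_set_image]
    exact and_iff_right w.2
  have g_inj : Function.Injective fun S => (⟨g S, g_sub S⟩ : {y | ∀ w, mem w y → mem w x}) := by
    intro S₁ S₂ h
    ext w
    rw [← mem_g_iff, ← mem_g_iff, show g S₁ = g S₂ from congrArg Subtype.val h]
  calc #{w | mem w x} < 2 ^ #{w | mem w x} := cantor _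
    _ = #(Set {w | mem w x}) := mk_set.symm
    _ ≤ _ := mk_le_of_injective g_inj

theorem subset_V_mem_V (V : M → M)
    (defV : ∀ x y : M, mem y (V x) ↔ ∃ z, mem z x ∧ ∀ w, mem w y → mem w (V z))
    {a b : M} (hab : mem a b) :
    {y | ∀ w, mem w y → mem w (V a)} ⊆ {y | mem y (V b)} :=
  fun _ hy => (defV b _).2 ⟨a, hab, hy⟩

theorem mk_mem_V_lt_of_mem (V : M → M)
    (defV : ∀ x y : M, mem y (V x) ↔ ∃ z, mem z x ∧ ∀ w, mem w y → mem w (V z))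
    (sep : ∀ (x : M) (P : M → Prop), ∃ z : M, ∀ w, mem w z ↔ (mem w x ∧ P w))
    {a b : M} (hab : mem a b) :
    #{w | mem w (V a)} < #{w | mem w (V b)} :=
  (mk_mem_lt_mk_subset_of_separation mem (sep (V a))).trans_le
    (mk_le_mk_of_subset (subset_V_mem_V mem V defV hab))

end

theorem epsilon_induction_of_H_omega_general
    {M : Type*} (mem : M → M → Prop) (V : M → M)
    (defV : ∀ x y : M, mem y (V x) ↔ ∃ z, mem z x ∧ ∀ w, mem w y → mem w (V z))
    (sep : ∀ (x : M) (P : M → Prop), ∃ z : M, ∀ w, mem w z ↔ (mem w x ∧ P w)) :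
    WellFounded mem ∧
      ∀ P : M → Prop, (∀ y, (∀ z, mem z y → P z) → P y) → ∀ y, P y := by
  have wf : WellFounded mem :=
    Subrelation.wf (mk_mem_V_lt_of_mem mem V defV sep)
      (InvImage.wf (fun x => #{w | mem w (V x)}) Cardinal.lt_wf)
  exact ⟨wf, fun P h y => wf.induction y h⟩

theorem epsilon_induction_of_H_omega
    {M : Type*} (mem : M → M → Prop) (V : M → M)
    (ext : ∀ x y : M, (∀ z, mem z x ↔ mem z y) → x = y)
    (defV : ∀ x y : M, mem y (V x) ↔ ∃ z, mem z x ∧ ∀ w, mem w y → mem w (V z))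
    (sep : ∀ (x : M) (P : M → Prop), ∃ z : M, ∀ w, mem w z ↔ (mem w x ∧ P w)) :
    WellFounded mem ∧
      ∀ P : M → Prop, (∀ y, (∀ z, mem z y → P z) → P y) → ∀ y, P y :=
  epsilon_induction_of_H_omega_general mem V defV sep
end

section
/- Let M be a type equipped with a binary relation ∈ : M → M → Prop and a unary function V̄ : M → M satisfying Extensionality (∀ x y, (∀ z, z ∈ x ↔ z ∈ y) → x = y), the Defining Axiom for V̄ (∀ x y, y ∈ V̄(x) ↔ ∃ z, z ∈ x ∧ y ⊆ V̄(z)), and such that ∈ is well-founded. Then for every x : M one has x ⊆ V̄(x). -/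
theorem subset_Vbar_general
    {M : Type*} (mem : M → M → Prop) (V : M → M)
    (defV : ∀ x y : M, mem y (V x) ↔ ∃ z, mem z x ∧ ∀ w, mem w y → mem w (V z))
    (wf : WellFounded mem) :
    ∀ x : M, ∀ z, mem z x → mem z (V x) := by
  intro x
  induction x using wf.induction with
  | _ x ih => exact fun z hz => (defV x z).mpr ⟨z, hz, ih z hz⟩

theorem subset_Vbar
    {M : Type*} (mem : M → M → Prop) (V : M → M)
    (ext : ∀ x y : M, (∀ z, mem z x ↔ mem z y) → x = y)
    (defV : ∀ x y : M, mem y (V x) ↔ ∃ z, mem z x ∧ ∀ w, mem w y → mem w (V z))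
    (wf : WellFounded mem) :
    ∀ x : M, ∀ z, mem z x → mem z (V x) :=
  subset_Vbar_general mem V defV wf
end

section
/- Let M be a type equipped with a binary relation ∈ : M → M → Prop and a unary function V̄ : M → M satisfying Extensionality (∀ x y, (∀ z, z ∈ x ↔ z ∈ y) → x = y), the Defining Axiom for V̄ (∀ x y, y ∈ V̄(x) ↔ ∃ z, z ∈ x ∧ y ⊆ V̄(z)), and such that ∈ is well-founded. Then for every x : M the element V̄(x) is transitive, i.e. for all y, if y ∈ V̄(x) then y ⊆ V̄(x). -/
theorem Vbar_transitive_general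
    {M : Type*} (mem : M → M → Prop) (V : M → M)
    (defV : ∀ x y : M, mem y (V x) ↔ ∃ z, mem z x ∧ ∀ w, mem w y → mem w (V z))
    (wf : WellFounded mem) :
    ∀ x : M, ∀ y, mem y (V x) → ∀ z, mem z y → mem z (V x) := by
  intro x
  induction x using wf.induction with
  | _ x ih =>
    intro y hy z hz
    obtain ⟨w, hwx, hyw⟩ := (defV x y).mp hy
    exact (defV x z).mpr ⟨w, hwx, ih w hwx z (hyw z hz)⟩

theorem Vbar_transitive
    {M : Type*} (mem : M → M → Prop) (V : M → M)
    (ext : ∀ x y : M, (∀ z, mem z x ↔ mem z y) → x = y)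
    (defV : ∀ x y : M, mem y (V x) ↔ ∃ z, mem z x ∧ ∀ w, mem w y → mem w (V z))
    (wf : WellFounded mem) :
    ∀ x : M, ∀ y, mem y (V x) → ∀ z, mem z y → mem z (V x) :=
  Vbar_transitive_general mem V defV wf
end

section
/- Let M be a type equipped with a binary relation ∈ : M → M → Prop and a unary function V̄ : M → M satisfying Extensionality (∀ x y, (∀ z, z ∈ x ↔ z ∈ y) → x = y), the Defining Axiom for V̄ (∀ x y, y ∈ V̄(x) ↔ ∃ z, z ∈ x ∧ y ⊆ V̄(z)), and such that ∈ is well-founded. Then for every x : M the element V̄(x) is closed under V̄: for all y, if y ∈ V̄(x) then V̄(y) ∈ V̄(x). -/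
theorem V_subset_of_subset_V {M : Type*} {mem : M → M → Prop} {V : M → M}
    (defV : ∀ x y : M, mem y (V x) ↔ ∃ z, mem z x ∧ ∀ w, mem w y → mem w (V z))
    (wf : WellFounded mem) (z : M) :
    ∀ u, (∀ w, mem w u → mem w (V z)) → ∀ w, mem w (V u) → mem w (V z) := by
  induction z using wf.induction with
  | _ z ih =>
    intro u hu w hw
    obtain ⟨b, hbu, hwb⟩ := (defV u w).mp hw
    obtain ⟨c, hcz, hbc⟩ := (defV z b).mp (hu b hbu)
    exact (defV z w).mpr ⟨c, hcz, fun a ha => ih c hcz b hbc a (hwb a ha)⟩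

theorem Vbar_closed_under_Vbar_general
    {M : Type*} (mem : M → M → Prop) (V : M → M)
    (defV : ∀ x y : M, mem y (V x) ↔ ∃ z, mem z x ∧ ∀ w, mem w y → mem w (V z))
    (wf : WellFounded mem) :
    ∀ x : M, ∀ y, mem y (V x) → mem (V y) (V x) := by
  intro x y hy
  obtain ⟨z, hzx, hyz⟩ := (defV x y).mp hy
  exact (defV x (V y)).mpr ⟨z, hzx, V_subset_of_subset_V defV wf z y hyz⟩

theorem Vbar_closed_under_Vbar
    {M : Type*} (mem : M → M → Prop) (V : M → M)
    (ext : ∀ x y : M, (∀ z, mem z x ↔ mem z y) → x = y)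
    (defV : ∀ x y : M, mem y (V x) ↔ ∃ z, mem z x ∧ ∀ w, mem w y → mem w (V z))
    (wf : WellFounded mem) :
    ∀ x : M, ∀ y, mem y (V x) → mem (V y) (V x) :=
  Vbar_closed_under_Vbar_general mem V defV wf
end

section
/- Let M be a type equipped with a binary relation ∈ : M → M → Prop and a unary function V̄ : M → M satisfying Extensionality (∀ x y, (∀ z, z ∈ x ↔ z ∈ y) → x = y), the Defining Axiom for V̄ (∀ x y, y ∈ V̄(x) ↔ ∃ z, z ∈ x ∧ y ⊆ V̄(z)), and such that ∈ is well-founded. Then V̄ is idempotent: V̄(V̄(x)) = V̄(x) for every x : M. -/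
/-!
Two ∈-inductions. First, every `z` is a subset of `V̄ z`. Second, `z ⊆ V̄ u` implies
`V̄ z ⊆ V̄ u`: an element of `V̄ z` lies below some `v ∈ z ⊆ V̄ u`, hence below some `t ∈ u`
with `v ⊆ V̄ t`, and the induction hypothesis for `v` gives `V̄ v ⊆ V̄ t`.
The first fact gives `V̄ x ⊆ V̄ (V̄ x)`, the second `V̄ (V̄ x) ⊆ V̄ x`.
-/

namespace Vbar

variable {M : Type*} {mem : M → M → Prop} {V : M → M}

def Subset (mem : M → M → Prop) (x y : M) : Prop := ∀ z, mem z x → mem z y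

theorem Subset.trans {x y z : M} (hxy : Subset mem x y) (hyz : Subset mem y z) :
    Subset mem x z :=
  fun w hw => hyz w (hxy w hw)

theorem subset_self_V
    (defV : ∀ x y : M, mem y (V x) ↔ ∃ z, mem z x ∧ Subset mem y (V z))
    (wf : WellFounded mem) (z : M) : Subset mem z (V z) := by
  induction z using wf.induction with
  | _ z ih => exact fun w hw => (defV z w).mpr ⟨w, hw, ih w hw⟩

theorem V_subset_of_subset_V
    (defV : ∀ x y : M, mem y (V x) ↔ ∃ z, mem z x ∧ Subset mem y (V z))
    (wf : WellFounded mem) (z : M) :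
    ∀ u, Subset mem z (V u) → Subset mem (V z) (V u) := by
  induction z using wf.induction with
  | _ z ih =>
    intro u hzu a ha
    obtain ⟨v, hvz, hav⟩ := (defV z a).mp ha
    obtain ⟨t, htu, hvt⟩ := (defV u v).mp (hzu v hvz)
    exact (defV u a).mpr ⟨t, htu, hav.trans (ih v hvz t hvt)⟩

theorem V_mono
    (defV : ∀ x y : M, mem y (V x) ↔ ∃ z, mem z x ∧ Subset mem y (V z))
    {x x' : M} (h : Subset mem x x') : Subset mem (V x) (V x') := by
  intro y hy
  obtain ⟨z, hzx, hyz⟩ := (defV x y).mp hy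
  exact (defV x' y).mpr ⟨z, h z hzx, hyz⟩

theorem V_V_subset
    (defV : ∀ x y : M, mem y (V x) ↔ ∃ z, mem z x ∧ Subset mem y (V z))
    (wf : WellFounded mem) (x : M) : Subset mem (V (V x)) (V x) := by
  intro y hy
  obtain ⟨z, hzVx, hyz⟩ := (defV (V x) y).mp hy
  obtain ⟨u, hux, hzu⟩ := (defV x z).mp hzVx
  exact (defV x y).mpr ⟨u, hux, hyz.trans (V_subset_of_subset_V defV wf z u hzu)⟩

end Vbar

theorem Vbar_idempotent
    {M : Type*} (mem : M → M → Prop) (V : M → M)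
    (ext : ∀ x y : M, (∀ z, mem z x ↔ mem z y) → x = y)
    (defV : ∀ x y : M, mem y (V x) ↔ ∃ z, mem z x ∧ ∀ w, mem w y → mem w (V z))
    (wf : WellFounded mem) :
    ∀ x : M, V (V x) = V x := by
  intro x
  have hsub : Vbar.Subset mem (V (V x)) (V x) := Vbar.V_V_subset defV wf x
  have hsup : Vbar.Subset mem (V x) (V (V x)) :=
    Vbar.V_mono defV (Vbar.subset_self_V defV wf x)
  exact ext _ _ fun y => ⟨hsub y, hsup y⟩
end

section
/- Let M be a type equipped with a binary relation ∈ : M → M → Prop and a unary function V̄ : M → M satisfying Extensionality (∀ x y, (∀ z, z ∈ x ↔ z ∈ y) → x = y), the Defining Axiom for V̄ (∀ x y, y ∈ V̄(x) ↔ ∃ z, z ∈ x ∧ y ⊆ V̄(z)), and such that ∈ is well-founded. Then for all x, y : M exactly the following trichotomy holds: V̄(x) ∈ V̄(y), or V̄(x) = V̄(y), or V̄(y) ∈ V̄(x). -/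
/-!
By ε-induction each `V̄ x` is transitive, and by the defining axiom `V̄ y` is closed under
subsets of its elements. Trichotomy then follows by a double ε-induction on `y` and `x`: if
neither `V̄ x ∈ V̄ y` nor `V̄ y ∈ V̄ x`, the induction hypotheses show that each of `V̄ x`, `V̄ y`
is contained in the other, and extensionality identifies them.
-/

def IsVbar {M : Type*} (mem : M → M → Prop) (V : M → M) : Prop :=
  ∀ x y : M, mem y (V x) ↔ ∃ z, mem z x ∧ ∀ w, mem w y → mem w (V z)

def VbarComparable {M : Type*} (mem : M → M → Prop) (V : M → M) (x y : M) : Prop :=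
  mem (V x) (V y) ∨ V x = V y ∨ mem (V y) (V x)

theorem VbarComparable.symm {M : Type*} {mem : M → M → Prop} {V : M → M} {x y : M}
    (h : VbarComparable mem V x y) : VbarComparable mem V y x := by
  rcases h with h | h | h
  exacts [Or.inr (Or.inr h), Or.inr (Or.inl h.symm), Or.inl h]

namespace IsVbar

variable {M : Type*} {mem : M → M → Prop} {V : M → M}

theorem mem_of_subset_of_mem (hV : IsVbar mem V) {x a b : M} (ha : mem a (V x))
    (hba : ∀ w, mem w b → mem w a) : mem b (V x) := by
  obtain ⟨z, hz, haz⟩ := (hV x a).mp ha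
  exact (hV x b).mpr ⟨z, hz, fun w hw => haz w (hba w hw)⟩

theorem mem_trans (hV : IsVbar mem V) (wf : WellFounded mem) (x : M) :
    ∀ a b, mem a (V x) → mem b a → mem b (V x) := by
  induction x using wf.induction with
  | _ x ih =>
    intro a b ha hb
    obtain ⟨z, hz, haz⟩ := (hV x a).mp ha
    exact (hV x b).mpr ⟨z, hz, fun w hw => ih z hz b w (haz b hb) hw⟩

theorem subset_of_forall_comparable (hV : IsVbar mem V) (wf : WellFounded mem) {x y : M}
    (hcomp : ∀ w, mem w x → VbarComparable mem V w y) (hyx : ¬ mem (V y) (V x)) :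
    ∀ u, mem u (V x) → mem u (V y) := by
  intro u hu
  obtain ⟨w, hw, huw⟩ := (hV x u).mp hu
  rcases hcomp w hw with hwy | hwy | hwy
  · exact hV.mem_of_subset_of_mem hwy huw
  · exact absurd ((hV x (V y)).mpr ⟨w, hw, fun t ht => hwy ▸ ht⟩) hyx
  · exact absurd ((hV x (V y)).mpr ⟨w, hw, fun t => hV.mem_trans wf w _ t hwy⟩) hyx

theorem comparable (hV : IsVbar mem V) (wf : WellFounded mem)
    (ext : ∀ x y : M, (∀ z, mem z x ↔ mem z y) → x = y) (x y : M) :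
    VbarComparable mem V x y := by
  induction y using wf.induction generalizing x with
  | _ y ihy =>
    induction x using wf.induction with
    | _ x ihx =>
      by_cases hxy : mem (V x) (V y)
      · exact Or.inl hxy
      by_cases hyx : mem (V y) (V x)
      · exact Or.inr (Or.inr hyx)
      have hsub := hV.subset_of_forall_comparable wf ihx hyx
      have hsup := hV.subset_of_forall_comparable wf (fun z hz => (ihy z hz x).symm) hxy
      exact Or.inr (Or.inl (ext _ _ fun u => ⟨hsub u, hsup u⟩))

end IsVbar

theorem Vbar_trichotomy
    {M : Type*} (mem : M → M → Prop) (V : M → M)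
    (ext : ∀ x y : M, (∀ z, mem z x ↔ mem z y) → x = y)
    (defV : ∀ x y : M, mem y (V x) ↔ ∃ z, mem z x ∧ ∀ w, mem w y → mem w (V z))
    (wf : WellFounded mem) :
    ∀ x y : M, mem (V x) (V y) ∨ V x = V y ∨ mem (V y) (V x) :=
  IsVbar.comparable defV wf ext
end

section
/- Let M be a type equipped with a binary relation ∈ : M → M → Prop and unary functions V̄, P : M → M satisfying Extensionality (∀ x y, (∀ z, z ∈ x ↔ z ∈ y) → x = y), the Defining Axiom for V̄ (∀ x y, y ∈ V̄(x) ↔ ∃ z, z ∈ x ∧ y ⊆ V̄(z)), the Powerset Axiom (∀ x y, y ∈ P(x) ↔ y ⊆ x), and full Separation (∀ x : M, ∀ Q : M → Prop, ∃ z, ∀ w, w ∈ z ↔ (w ∈ x ∧ Q w)). Then the usual set-existence axioms hold in M: (Pairing) for all x, y there exists z with ∀ w, w ∈ z ↔ (w = x ∨ w = y); (Union) for all x there exists u with ∀ w, w ∈ u ↔ ∃ v, v ∈ x ∧ w ∈ v; (Transitive containment) for all x there exists a transitive t (∀ y, y ∈ t → y ⊆ t) with x ∈ t. -/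
/-!
Comparing the sets `V̄ x` by cardinality makes `∈` well-founded: if `a ∈ b`, separation carves
every subset of `V̄ a` out of `V̄ a`, and each such set lies in `V̄ b`, so Cantor's theorem gives
`#V̄ a < #V̄ b`. By `∈`-induction, `x ⊆ V̄ x`, every `V̄ a` is transitive, and any two sets satisfy
`x ⊆ V̄ y` or `y ⊆ V̄ x`. Hence `{x, y}` can be separated from `P (V̄ y)` or from `P (V̄ x)`,
`⋃ x` from `V̄ x`, and `V̄ (P x)` is a transitive set containing `x`.
-/

open Cardinal

namespace EAset

variable {M : Type*} {mem : M → M → Prop} {V P : M → M}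

theorem mk_lt_of_mem
    (defV : ∀ x y : M, mem y (V x) ↔ ∃ z, mem z x ∧ ∀ w, mem w y → mem w (V z))
    (sep : ∀ (x : M) (Q : M → Prop), ∃ z : M, ∀ w, mem w z ↔ (mem w x ∧ Q w))
    {a b : M} (hab : mem a b) :
    #{w // mem w (V a)} < #{w // mem w (V b)} := by
  choose z hz using fun A : Set {w // mem w (V a)} =>
    sep (V a) fun w => ∃ h : mem w (V a), ⟨w, h⟩ ∈ A
  have mem_z : ∀ A w (h : mem w (V a)), mem w (z A) ↔ ⟨w, h⟩ ∈ A := fun A w h =>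
    (hz A w).trans ⟨fun ⟨_, _, hA⟩ => hA, fun hA => ⟨h, h, hA⟩⟩
  have z_mem : ∀ A, mem (z A) (V b) := fun A =>
    (defV b (z A)).2 ⟨a, hab, fun w hw => ((hz A w).1 hw).1⟩
  have z_inj : Function.Injective fun A => (⟨z A, z_mem A⟩ : {w // mem w (V b)}) := by
    intro A B hAB
    ext ⟨w, h⟩
    rw [← mem_z A w h, ← mem_z B w h, show z A = z B from congrArg Subtype.val hAB]
  calc #{w // mem w (V a)} < #(Set {w // mem w (V a)}) := by rw [mk_set]; exact cantor _
    _ ≤ #{w // mem w (V b)} := mk_le_of_injective z_inj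

theorem wellFounded_mem
    (defV : ∀ x y : M, mem y (V x) ↔ ∃ z, mem z x ∧ ∀ w, mem w y → mem w (V z))
    (sep : ∀ (x : M) (Q : M → Prop), ∃ z : M, ∀ w, mem w z ↔ (mem w x ∧ Q w)) :
    WellFounded mem :=
  Subrelation.wf (mk_lt_of_mem defV sep) (InvImage.wf _ Cardinal.lt_wf)

theorem subset_V_self
    (defV : ∀ x y : M, mem y (V x) ↔ ∃ z, mem z x ∧ ∀ w, mem w y → mem w (V z))
    (wf : WellFounded mem) (x : M) : ∀ w, mem w x → mem w (V x) := by
  induction x using wf.induction with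
  | _ x ih => exact fun w hw => (defV x w).2 ⟨w, hw, ih w hw⟩

theorem mem_V_of_mem_of_mem_V
    (defV : ∀ x y : M, mem y (V x) ↔ ∃ z, mem z x ∧ ∀ w, mem w y → mem w (V z))
    (wf : WellFounded mem) (a : M) : ∀ y, mem y (V a) → ∀ w, mem w y → mem w (V a) := by
  induction a using wf.induction with
  | _ a ih =>
    intro y hy w hw
    obtain ⟨z, hza, hyz⟩ := (defV a y).1 hy
    exact (defV a w).2 ⟨z, hza, ih z hza w (hyz w hw)⟩

theorem subset_V_or_subset_V
    (defV : ∀ x y : M, mem y (V x) ↔ ∃ z, mem z x ∧ ∀ w, mem w y → mem w (V z))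
    (wf : WellFounded mem) (x y : M) :
    (∀ w, mem w x → mem w (V y)) ∨ (∀ w, mem w y → mem w (V x)) := by
  induction x using wf.induction generalizing y with
  | _ x ih =>
    refine or_iff_not_imp_left.2 fun hxy => ?_
    push Not at hxy
    obtain ⟨u, hux, hu⟩ := hxy
    intro z hzy
    refine (defV x z).2 ⟨u, hux, (ih u hux z).resolve_left fun huz => hu ?_⟩
    exact (defV y u).2 ⟨z, hzy, huz⟩

theorem exists_pair_of_subset_V
    (defV : ∀ x y : M, mem y (V x) ↔ ∃ z, mem z x ∧ ∀ w, mem w y → mem w (V z))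
    (pow : ∀ x y : M, mem y (P x) ↔ ∀ w, mem w y → mem w x)
    (sep : ∀ (x : M) (Q : M → Prop), ∃ z : M, ∀ w, mem w z ↔ (mem w x ∧ Q w))
    (wf : WellFounded mem) {x y : M} (hxy : ∀ w, mem w x → mem w (V y)) :
    ∃ z : M, ∀ w, mem w z ↔ (w = x ∨ w = y) := by
  obtain ⟨z, hz⟩ := sep (P (V y)) fun w => w = x ∨ w = y
  refine ⟨z, fun w => (hz w).trans (and_iff_right_of_imp ?_)⟩
  rintro (rfl | rfl)
  · exact (pow _ _).2 hxy
  · exact (pow _ _).2 (subset_V_self defV wf w)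

theorem exists_pair
    (defV : ∀ x y : M, mem y (V x) ↔ ∃ z, mem z x ∧ ∀ w, mem w y → mem w (V z))
    (pow : ∀ x y : M, mem y (P x) ↔ ∀ w, mem w y → mem w x)
    (sep : ∀ (x : M) (Q : M → Prop), ∃ z : M, ∀ w, mem w z ↔ (mem w x ∧ Q w))
    (wf : WellFounded mem) (x y : M) : ∃ z : M, ∀ w, mem w z ↔ (w = x ∨ w = y) := by
  rcases subset_V_or_subset_V defV wf x y with hxy | hyx
  · exact exists_pair_of_subset_V defV pow sep wf hxy
  · obtain ⟨z, hz⟩ := exists_pair_of_subset_V defV pow sep wf hyx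
    exact ⟨z, fun w => (hz w).trans or_comm⟩

theorem exists_sUnion
    (defV : ∀ x y : M, mem y (V x) ↔ ∃ z, mem z x ∧ ∀ w, mem w y → mem w (V z))
    (sep : ∀ (x : M) (Q : M → Prop), ∃ z : M, ∀ w, mem w z ↔ (mem w x ∧ Q w))
    (wf : WellFounded mem) (x : M) : ∃ u : M, ∀ w, mem w u ↔ ∃ v, mem v x ∧ mem w v := by
  obtain ⟨u, hu⟩ := sep (V x) fun w => ∃ v, mem v x ∧ mem w v
  refine ⟨u, fun w => (hu w).trans (and_iff_right_of_imp ?_)⟩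
  rintro ⟨v, hvx, hwv⟩
  exact (defV x w).2
    ⟨v, hvx, mem_V_of_mem_of_mem_V defV wf v w (subset_V_self defV wf v w hwv)⟩

theorem exists_transitive_mem
    (defV : ∀ x y : M, mem y (V x) ↔ ∃ z, mem z x ∧ ∀ w, mem w y → mem w (V z))
    (pow : ∀ x y : M, mem y (P x) ↔ ∀ w, mem w y → mem w x)
    (wf : WellFounded mem) (x : M) :
    ∃ t : M, (∀ y, mem y t → ∀ z, mem z y → mem z t) ∧ mem x t :=
  ⟨V (P x), mem_V_of_mem_of_mem_V defV wf (P x),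
    (defV (P x) x).2 ⟨x, (pow x x).2 fun _ h => h, subset_V_self defV wf x⟩⟩

end EAset

open EAset in
theorem set_existence_axioms_of_EAset_general
    {M : Type*} (mem : M → M → Prop) (V : M → M) (P : M → M)
    (defV : ∀ x y : M, mem y (V x) ↔ ∃ z, mem z x ∧ ∀ w, mem w y → mem w (V z))
    (pow : ∀ x y : M, mem y (P x) ↔ ∀ w, mem w y → mem w x)
    (sep : ∀ (x : M) (Q : M → Prop), ∃ z : M, ∀ w, mem w z ↔ (mem w x ∧ Q w)) :
    (∀ x y : M, ∃ z : M, ∀ w, mem w z ↔ (w = x ∨ w = y)) ∧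
    (∀ x : M, ∃ u : M, ∀ w, mem w u ↔ ∃ v, mem v x ∧ mem w v) ∧
    (∀ x : M, ∃ t : M, (∀ y, mem y t → ∀ z, mem z y → mem z t) ∧ mem x t) := by
  have wf := wellFounded_mem defV sep
  exact ⟨exists_pair defV pow sep wf, exists_sUnion defV sep wf, exists_transitive_mem defV pow wf⟩

theorem set_existence_axioms_of_EAset
    {M : Type*} (mem : M → M → Prop) (V : M → M) (P : M → M)
    (ext : ∀ x y : M, (∀ z, mem z x ↔ mem z y) → x = y)
    (defV : ∀ x y : M, mem y (V x) ↔ ∃ z, mem z x ∧ ∀ w, mem w y → mem w (V z))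
    (pow : ∀ x y : M, mem y (P x) ↔ ∀ w, mem w y → mem w x)
    (sep : ∀ (x : M) (Q : M → Prop), ∃ z : M, ∀ w, mem w z ↔ (mem w x ∧ Q w)) :
    (∀ x y : M, ∃ z : M, ∀ w, mem w z ↔ (w = x ∨ w = y)) ∧
    (∀ x : M, ∃ u : M, ∀ w, mem w u ↔ ∃ v, mem v x ∧ mem w v) ∧
    (∀ x : M, ∃ t : M, (∀ y, mem y t → ∀ z, mem z y → mem z t) ∧ mem x t) :=
  set_existence_axioms_of_EAset_general mem V P defV pow sep
end

section
/- Let T : ℕ → ℕ be the superexponential tower (T 0 = 0, T (n+1) = 2^(T n)) and let V_Ack(x) be the least y such that x ≤ y and y = T z − 1 for some z ≥ 1. Then V_Ack satisfies the defining axiom for V̄ under Ackermann membership: for all x, y : ℕ, y ∈_Ack V_Ack(x) if and only if there exists z with z ∈_Ack x and y ⊆_Ack V_Ack(z). -/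
/-!
Write `T n ≤ x < T (n + 1)`. Then `VAck x = T (n + 1) - 1 = 2 ^ T n - 1`, whose Ackermann elements
are exactly the numbers below `T n`, while `y ⊆ VAck x` says `y < T (n + 1)`. For `x ≠ 0` the
largest element of `x` is `log₂ x`, which lies one level lower, `T (n - 1) ≤ log₂ x < T n`;
so both sides of the axiom amount to `y < T n`.
-/

/-- The superexponential tower: `T 0 = 0`, `T (n+1) = 2 ^ T n`. -/
def T : ℕ → ℕ
  | 0 => 0
  | n + 1 => 2 ^ T n

/-- `VAck x` is the least `y` such that `x ≤ y` and `y = T z - 1` for some `z ≥ 1`. -/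
noncomputable def VAck (x : ℕ) : ℕ := sInf {y : ℕ | x ≤ y ∧ ∃ z : ℕ, 1 ≤ z ∧ y = T z - 1}

lemma lt_two_pow_iff_forall_testBit_lt {y k : ℕ} :
    y < 2 ^ k ↔ ∀ j, y.testBit j = true → j < k := by
  refine ⟨fun hy j hj => ?_, fun h => Nat.lt_pow_two_of_testBit y fun i hi => ?_⟩
  · exact (Nat.pow_lt_pow_iff_right (by norm_num)).1 ((Nat.ge_two_pow_of_testBit hj).trans_lt hy)
  · exact Bool.eq_false_iff.2 fun hb => absurd (h i hb) (Nat.not_lt.2 hi)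

lemma T_succ (n : ℕ) : T (n + 1) = 2 ^ T n := rfl

lemma T_succ_pos (n : ℕ) : 0 < T (n + 1) := Nat.two_pow_pos _

lemma strictMono_T : StrictMono T :=
  strictMono_nat_of_lt_succ fun _ => Nat.lt_two_pow_self

lemma exists_T_le_and_lt_T_succ (x : ℕ) : ∃ n, T n ≤ x ∧ x < T (n + 1) := by
  have hex : ∃ m, x < T m := ⟨x + 1, strictMono_T.le_apply.trans_lt (strictMono_T x.lt_succ_self)⟩
  obtain ⟨n, hn⟩ : ∃ n, Nat.find hex = n + 1 :=
    Nat.exists_eq_succ_of_ne_zero fun h => by simpa [h, T] using Nat.find_spec hex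
  exact ⟨n, Nat.not_lt.1 (Nat.find_min hex (by omega)), hn ▸ Nat.find_spec hex⟩

section Level

variable {x n : ℕ} (hlo : T n ≤ x) (hhi : x < T (n + 1))
include hlo hhi

lemma VAck_eq_T_succ_sub_one : VAck x = T (n + 1) - 1 := by
  refine IsLeast.csInf_eq ⟨⟨by omega, n + 1, by omega, rfl⟩, ?_⟩
  rintro _ ⟨hxy, z, hz, rfl⟩
  obtain ⟨z, rfl⟩ := Nat.exists_eq_add_of_le' hz
  have hnz : n < z + 1 := strictMono_T.lt_iff_lt.1 (by have := T_succ_pos z; omega)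
  exact Nat.sub_le_sub_right (strictMono_T.monotone hnz) 1

lemma testBit_VAck_iff (j : ℕ) : (VAck x).testBit j = true ↔ j < T n := by
  simp [VAck_eq_T_succ_sub_one hlo hhi, T_succ]

lemma forall_testBit_VAck_iff (y : ℕ) :
    (∀ j, y.testBit j = true → (VAck x).testBit j = true) ↔ y < T (n + 1) := by
  simp only [testBit_VAck_iff hlo hhi, T_succ, lt_two_pow_iff_forall_testBit_lt]

end Level

lemma T_le_log2_and_log2_lt {x k : ℕ} (hlo : T (k + 1) ≤ x) (hhi : x < T (k + 2)) :
    T k ≤ x.log2 ∧ x.log2 < T (k + 1) := by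
  have hx : x ≠ 0 := (T_succ_pos k).trans_le hlo |>.ne'
  exact ⟨(Nat.le_log2 hx).2 hlo, (Nat.log2_lt hx).2 hhi⟩

theorem VAck_defining_axiom :
    ∀ x y : ℕ, Nat.testBit (VAck x) y = true ↔
      ∃ z : ℕ, Nat.testBit x z = true ∧
        ∀ j, Nat.testBit y j = true → Nat.testBit (VAck z) j = true := by
  intro x y
  obtain ⟨n, hlo, hhi⟩ := exists_T_le_and_lt_T_succ x
  rw [testBit_VAck_iff hlo hhi]
  constructor
  · intro hy
    obtain ⟨k, rfl⟩ : ∃ k, n = k + 1 :=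
      Nat.exists_eq_succ_of_ne_zero (by rintro rfl; simp [T] at hy)
    obtain ⟨hlo', hhi'⟩ := T_le_log2_and_log2_lt hlo hhi
    have hx : x ≠ 0 := (T_succ_pos k).trans_le hlo |>.ne'
    exact ⟨x.log2, Nat.testBit_log2 hx, (forall_testBit_VAck_iff hlo' hhi' y).2 hy⟩
  · rintro ⟨z, hz, hyz⟩
    obtain ⟨m, hlo', hhi'⟩ := exists_T_le_and_lt_T_succ z
    have hzn : z < T n := lt_two_pow_iff_forall_testBit_lt.1 hhi z hz
    have hmn : m + 1 ≤ n := strictMono_T.lt_iff_lt.1 (hlo'.trans_lt hzn)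
    exact ((forall_testBit_VAck_iff hlo' hhi' y).1 hyz).trans_le (strictMono_T.monotone hmn)
end
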